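/- The Euclidean dual code C_k(A,v)^⊥ is AMDS (i.e., since it has length n+2 and dimension n+2−k, its minimum Hamming distance equals k) if and only if at least one of the following holds: (1) there exists a subset L ⊆ {1,…,n} of size k with Σ_{i∈L} α_i = 0; or (2) there exists a subset M ⊆ {1,…,n} of size k−1 with δ = (Σ_{i∈M} α_i)^2 − Σ_{i<j, i,j∈M} α_i α_j. -/

import Mathlib

/-- The Euclidean dual of a code `C ⊆ F^N`. -/
def dualCode {F : Type*} [Field F] {N : ℕ} (C : Submodule F (Fin N → F)) :
    Submodule F (Fin N → F) where
  carrier := { y | ∀ x ∈ C, ∑ i, x i * y i = 0 }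
  zero_mem' := fun x _ => by simp
  add_mem' := fun {a b} ha hb x hx => by
    have h : ∑ i, x i * (a + b) i = (∑ i, x i * a i) + ∑ i, x i * b i := by
      rw [← Finset.sum_add_distrib]
      exact Finset.sum_congr rfl fun i _ => by simp [mul_add]
    rw [h, ha x hx, hb x hx, add_zero]
  smul_mem' := fun c {a} ha x hx => by
    have h : ∑ i, x i * (c • a) i = c * ∑ i, x i * a i := by
      rw [Finset.mul_sum]
      exact Finset.sum_congr rfl fun i _ => by
        simp only [Pi.smul_apply, smul_eq_mul]; ring
    rw [h, ha x hx, mul_zero]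

/-- `minDist C d` : the minimum Hamming distance of the linear code `C` equals `d`. -/
def minDist {F : Type*} [Field F] [DecidableEq F] {N : ℕ}
    (C : Submodule F (Fin N → F)) (d : ℕ) : Prop :=
  (∃ c ∈ C, c ≠ 0 ∧ hammingNorm c = d) ∧ ∀ c ∈ C, c ≠ 0 → d ≤ hammingNorm c

/-- The k×(n+2) generator matrix `G_k` of `C_k(A,v)`. -/
noncomputable def Gkmat (F : Type*) [Field F] (n k : ℕ) (α v : Fin n → F) (δ : F) :
    Fin k → Fin (n + 2) → F := fun i j =>
  if hj : (j : ℕ) < n then v ⟨j, hj⟩ * α ⟨j, hj⟩ ^ (if (i : ℕ) = k - 1 then k else (i : ℕ))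
  else if (j : ℕ) = n then (if (i : ℕ) = k - 1 then 1 else 0)
  else if (i : ℕ) = k - 2 then 1 else if (i : ℕ) = k - 1 then δ else 0

/-!
Put `c_j = v_j y_j`. A word `y` of the dual code is then a weight vector `c` whose power sums
`m_e = ∑ c_j α_j ^ e` vanish for `e < k - 2`, plus two checks tying `m_{k-2}` and `m_k` to the
last two coordinates. Since the nodes are distinct, nonzero weights on `s` nodes cannot kill `s`
consecutive power sums (Lagrange interpolation), which forces weight at least `k`. If the first
`#T - 1` power sums of weights supported on `T` vanish, evaluating the nodal polynomial
`∏_{i ∈ T} (X - α_i)` at the nodes gives `m_{#T} = e₁ m_{#T-1}` and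
`m_{#T+1} = (e₁² - e₂) m_{#T-1}`. A word of weight exactly `k` therefore either lives on `k` nodes
with `e₁ = 0`, or on `k - 1` nodes and one extra coordinate with `δ = e₁² - e₂`; conversely the
Lagrange nodal weights of such a set give a word of weight `k`.
-/

open Finset Polynomial

lemma sum_powersetCard_two_prod {ι R : Type*} [CommSemiring R] [LinearOrder ι] (s : Finset ι)
    (f : ι → R) :
    ∑ u ∈ s.powersetCard 2, ∏ i ∈ u, f i = ∑ i ∈ s, ∑ j ∈ s with i < j, f i * f j := by
  rw [sum_sigma']
  symm
  refine sum_bij (fun p _ => {p.1, p.2}) ?_ ?_ ?_ ?_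
  · rintro ⟨i, j⟩ h
    simp only [mem_sigma, mem_filter] at h
    exact mem_powersetCard.2 ⟨insert_subset h.1 (singleton_subset_iff.2 h.2.1), card_pair h.2.2.ne⟩
  · rintro ⟨i, j⟩ h ⟨i', j'⟩ h' heq
    simp only [mem_sigma, mem_filter] at h h'
    have hpair := congrArg (fun u : Finset ι => (u : Set ι)) heq
    simp only [coe_pair, Set.pair_eq_pair_iff] at hpair
    rcases hpair with ⟨rfl, rfl⟩ | ⟨rfl, rfl⟩
    · rfl
    · exact absurd (h.2.2.trans h'.2.2) (lt_irrefl _)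
  · intro u hu
    obtain ⟨hsub, hcard⟩ := mem_powersetCard.1 hu
    obtain ⟨a, b, hab, rfl⟩ := card_eq_two.1 hcard
    have ha : a ∈ s := hsub (by simp)
    have hb : b ∈ s := hsub (by simp)
    rcases hab.lt_or_gt with h | h
    · exact ⟨⟨a, b⟩, by simp [ha, hb, h], rfl⟩
    · exact ⟨⟨b, a⟩, by simp [ha, hb, h], pair_comm _ _⟩
  · rintro ⟨i, j⟩ h
    simp only [mem_sigma, mem_filter] at h
    exact (prod_pair h.2.2.ne).symm

lemma hammingNorm_append {β : Type*} [Zero β] [DecidableEq β] {l m : ℕ} (w : Fin l → β)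
    (u : Fin m → β) : hammingNorm (Fin.append w u) = hammingNorm w + hammingNorm u := by
  simp only [hammingNorm, card_filter, Fin.sum_univ_add, Fin.append_left, Fin.append_right]

lemma hammingNorm_fin_two {β : Type*} [Zero β] [DecidableEq β] (u : Fin 2 → β) :
    hammingNorm u = (if u 0 = 0 then 0 else 1) + (if u 1 = 0 then 0 else 1) := by
  simp [hammingNorm, card_filter, Fin.sum_univ_two]

lemma mem_dualCode_span_iff {F : Type*} [Field F] {k N : ℕ} (G : Fin k → Fin N → F)
    (y : Fin N → F) :
    y ∈ dualCode (Submodule.span F (Set.range G)) ↔ ∀ i, ∑ j, G i j * y j = 0 := by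
  refine ⟨fun hy i => hy _ (Submodule.subset_span ⟨i, rfl⟩), fun h x hx => ?_⟩
  induction hx using Submodule.span_induction with
  | mem x hx => obtain ⟨i, rfl⟩ := hx; exact h i
  | zero => simp
  | add x y _ _ hx hy => simp [add_mul, sum_add_distrib, hx, hy]
  | smul a x _ hx => simp [mul_assoc, ← mul_sum, hx]

section Moments

variable {ι F : Type*} [Field F]

def moment (T : Finset ι) (c x : ι → F) (e : ℕ) : F :=
  ∑ i ∈ T, c i * x i ^ e

variable (T : Finset ι) (c x : ι → F)

lemma sum_mul_eval_eq_sum_coeff_mul_moment {Q : F[X]} {m : ℕ} (hQ : Q.natDegree < m) :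
    ∑ i ∈ T, c i * Q.eval (x i) = ∑ e ∈ range m, Q.coeff e * moment T c x e := by
  simp only [moment, eval_eq_sum_range' hQ, mul_sum]
  rw [sum_comm]
  exact sum_congr rfl fun _ _ => sum_congr rfl fun _ _ => by ring

lemma sum_coeff_nodal_mul_moment (s : ℕ) :
    ∑ e ∈ range (#T + 1), (Lagrange.nodal T x).coeff e * moment T c x (e + s) = 0 := by
  have h := sum_mul_eval_eq_sum_coeff_mul_moment T (fun i => c i * x i ^ s) x
    (Q := Lagrange.nodal T x) (m := #T + 1) (by rw [Lagrange.natDegree_nodal]; omega)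
  rw [sum_eq_zero fun i hi => by rw [Lagrange.eval_nodal_at_node hi, mul_zero]] at h
  rw [h]
  refine sum_congr rfl fun e _ => ?_
  simp only [moment, pow_add, mul_assoc, mul_comm (x _ ^ s)]

variable {T c x}

lemma moment_univ_of_notMem [Fintype ι] (h : ∀ i ∉ T, c i = 0) (e : ℕ) :
    moment univ c x e = moment T c x e :=
  (sum_subset (subset_univ T) fun i _ hi => by rw [h i hi, zero_mul]).symm

lemma eq_zero_of_moment_eq_zero [DecidableEq ι] (hx : Set.InjOn x T) {m : ℕ} (hm : #T ≤ m)
    (h : ∀ e < m, moment T c x e = 0) {j : ι} (hj : j ∈ T) : c j = 0 := by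
  have hdeg : (Lagrange.basis T x j).natDegree < m := by
    have := card_pos.2 ⟨j, hj⟩
    rw [Lagrange.natDegree_basis hx hj]
    omega
  have key := sum_mul_eval_eq_sum_coeff_mul_moment T c x hdeg
  rwa [sum_eq_single j (fun i hi hij => by rw [Lagrange.eval_basis_of_ne hij.symm hi, mul_zero])
    (fun h => absurd hj h), Lagrange.eval_basis_self hx hj, mul_one,
    sum_eq_zero fun e he => by rw [h e (mem_range.1 he), mul_zero]] at key

lemma moment_nodalWeight [DecidableEq ι] (hx : Set.InjOn x T) {e : ℕ} (he : e < #T) :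
    moment T (Lagrange.nodalWeight T x) x e = if e = #T - 1 then 1 else 0 := by
  have h := Lagrange.coeff_eq_sum hx (P := X ^ e) (by rw [degree_X_pow]; exact_mod_cast he)
  simp_rw [coeff_X_pow, eq_comm (a := #T - 1)] at h
  rw [h, moment]
  refine sum_congr rfl fun i _ => ?_
  rw [eval_pow, eval_X, Lagrange.nodalWeight, prod_inv_distrib, div_eq_mul_inv, mul_comm]

lemma exists_moment_eq_ite [DecidableEq ι] (hx : Set.InjOn x T) :
    ∃ c : ι → F, (∀ i ∉ T, c i = 0) ∧
      ∀ e < #T, moment T c x e = if e = #T - 1 then 1 else 0 :=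
  ⟨fun i => if i ∈ T then Lagrange.nodalWeight T x i else 0, fun i hi => if_neg hi,
    fun e he => by
      rw [← moment_nodalWeight hx he]
      exact sum_congr rfl fun i hi => by simp only [if_pos hi]⟩

lemma coeff_nodal_card : (Lagrange.nodal T x).coeff #T = 1 := by
  simpa [Lagrange.natDegree_nodal] using (Lagrange.nodal_monic (s := T) (v := x)).coeff_natDegree

lemma coeff_nodal_of_card_eq_add_one {t : ℕ} (hT : #T = t + 1) :
    (Lagrange.nodal T x).coeff t = -∑ i ∈ T, x i := by
  have h := prod_X_sub_C_coeff_card_pred T x (by omega)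
  rwa [hT, Nat.add_sub_cancel, ← Lagrange.nodal_eq] at h

lemma coeff_nodal_of_card_eq_add_two [LinearOrder ι] {t : ℕ} (hT : #T = t + 2) :
    (Lagrange.nodal T x).coeff t = ∑ i ∈ T, ∑ j ∈ T with i < j, x i * x j := by
  have h := Multiset.prod_X_sub_C_coeff (T.val.map x) (k := t) (by simp [hT])
  rw [Multiset.map_map, Multiset.card_map, card_val, hT, Nat.add_sub_cancel_left,
    esymm_map_val, sum_powersetCard_two_prod, neg_one_sq, one_mul] at h
  rw [Lagrange.nodal_eq, ← h]
  rfl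

lemma moment_card_eq_sum_mul {t : ℕ} (hT : #T = t + 1) (h : ∀ e < t, moment T c x e = 0) :
    moment T c x (t + 1) = (∑ i ∈ T, x i) * moment T c x t := by
  have key := sum_coeff_nodal_mul_moment T c x 0
  simp only [add_zero] at key
  rw [hT, sum_range_succ, sum_range_succ, sum_eq_zero fun e he => by
    rw [h e (mem_range.1 he), mul_zero], ← hT, coeff_nodal_card, hT,
    coeff_nodal_of_card_eq_add_one hT] at key
  linear_combination key

lemma moment_card_add_one_eq_mul [LinearOrder ι] {t : ℕ} (hT : #T = t + 2)
    (h : ∀ e < t + 1, moment T c x e = 0) :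
    moment T c x (t + 3) = ((∑ i ∈ T, x i) ^ 2 - ∑ i ∈ T, ∑ j ∈ T with i < j, x i * x j) *
      moment T c x (t + 1) := by
  have hnext := moment_card_eq_sum_mul hT h
  have key := sum_coeff_nodal_mul_moment T c x 1
  rw [hT, sum_range_succ, sum_range_succ, sum_range_succ, sum_eq_zero fun e he => by
    rw [h (e + 1) (by simpa using mem_range.1 he), mul_zero], ← hT, coeff_nodal_card, hT,
    coeff_nodal_of_card_eq_add_one hT, coeff_nodal_of_card_eq_add_two hT] at key
  linear_combination key + (∑ i ∈ T, x i) * hnext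

end Moments

section DualWord

variable {ι F : Type*} [Field F] [Fintype ι] {x c : ι → F} {u : Fin 2 → F} {δ : F} {t : ℕ}

/-- The parity checks of `C_{t+2}(A,v)^⊥`, with nodes `x = α`, for the word
`(c_j / v_j)_j ++ (u 0, u 1)`. -/
def IsDualWord (x c : ι → F) (u : Fin 2 → F) (δ : F) (t : ℕ) : Prop :=
  (∀ e < t, moment univ c x e = 0) ∧ moment univ c x t + u 1 = 0 ∧
    moment univ c x (t + 2) + u 0 + δ * u 1 = 0

lemma IsDualWord.moment_eq_zero (h : IsDualWord x c u δ t) (hb : u 1 = 0) :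
    ∀ e < t + 1, moment univ c x e = 0 := fun e he =>
  (Nat.lt_succ_iff_lt_or_eq.1 he).elim (h.1 e) fun he => by simpa [he, hb] using h.2.1

lemma IsDualWord.ne_zero (h : IsDualWord x c u δ t) (hb : u 1 ≠ 0) : c ≠ 0 := by
  rintro rfl
  exact hb (by simpa [moment] using h.2.1)

variable [DecidableEq F]

lemma hammingNorm_le_card_of_notMem {T : Finset ι} (h : ∀ i ∉ T, c i = 0) :
    hammingNorm c ≤ #T :=
  card_le_card fun i hi => by_contra fun hiT => (mem_filter.1 hi).2 (h i hiT)

lemma moment_univ_eq_moment_support (e : ℕ) :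
    moment univ c x e = moment {i | c i ≠ 0} c x e :=
  moment_univ_of_notMem (by simp) e

lemma lt_hammingNorm_of_moment_eq_zero [DecidableEq ι] (hx : Function.Injective x) (hc : c ≠ 0)
    {m : ℕ} (h : ∀ e < m, moment univ c x e = 0) : m < hammingNorm c := by
  by_contra! hle
  refine hc (funext fun i => by_contra fun hi => hi ?_)
  exact eq_zero_of_moment_eq_zero (T := ({i | c i ≠ 0} : Finset ι)) hx.injOn hle
    (fun e he => moment_univ_eq_moment_support (x := x) e ▸ h e he) (by simpa using hi)

lemma IsDualWord.hammingNorm_eq_zero_or_le [DecidableEq ι] (hx : Function.Injective x)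
    (h : IsDualWord x c u δ t) :
    hammingNorm c + hammingNorm u = 0 ∨ t + 2 ≤ hammingNorm c + hammingNorm u := by
  rw [hammingNorm_fin_two]
  rcases eq_or_ne (u 1) 0 with hb | hb
  · rcases eq_or_ne c 0 with rfl | hc
    · have ha : u 0 = 0 := by simpa [moment, hb] using h.2.2
      simp [ha, hb]
    · have := lt_hammingNorm_of_moment_eq_zero hx hc (h.moment_eq_zero hb)
      omega
  · have := lt_hammingNorm_of_moment_eq_zero hx (h.ne_zero hb) h.1
    split_ifs <;> omega

lemma IsDualWord.exists_sum_eq_zero [DecidableEq ι] (hx : Function.Injective x)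
    (h : IsDualWord x c u δ t) (hb : u 1 = 0) (hw : hammingNorm c + hammingNorm u = t + 2) :
    ∃ L : Finset ι, #L = t + 2 ∧ ∑ i ∈ L, x i = 0 := by
  set S : Finset ι := {i | c i ≠ 0}
  have hmom : ∀ e, moment univ c x e = moment S c x e := moment_univ_eq_moment_support
  have hcard : hammingNorm c = #S := rfl
  rw [hammingNorm_fin_two, if_pos hb] at hw
  have hc : c ≠ 0 := by
    rintro rfl
    rw [hammingNorm_zero] at hw
    split_ifs at hw <;> omega
  rw [hcard] at hw
  have hlow := h.moment_eq_zero hb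
  have hS : #S = t + 2 := by
    have := hcard ▸ lt_hammingNorm_of_moment_eq_zero hx hc hlow
    split_ifs at hw <;> omega
  have ha : u 0 = 0 := by
    by_contra ha
    simp only [ha, if_false] at hw
    omega
  have htop : moment S c x (t + 1) ≠ 0 := fun h0 => by
    have := lt_hammingNorm_of_moment_eq_zero hx hc (m := t + 2) fun e he =>
      (Nat.lt_succ_iff_lt_or_eq.1 he).elim (hlow e) fun he => he ▸ hmom (t + 1) ▸ h0
    omega
  have hnext := moment_card_eq_sum_mul hS fun e he => hmom e ▸ hlow e he
  rw [← hmom, ← hmom] at hnext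
  refine ⟨S, hS, (mul_eq_zero.1 ?_).resolve_right htop⟩
  rw [← hmom, ← hnext]
  simpa [ha, hb] using h.2.2

lemma IsDualWord.exists_eq_sq_sub [LinearOrder ι] (hx : Function.Injective x) (ht : 1 ≤ t)
    (h : IsDualWord x c u δ t) (hb : u 1 ≠ 0) (hw : hammingNorm c + hammingNorm u = t + 2) :
    ∃ M : Finset ι, #M = t + 1 ∧
      δ = (∑ i ∈ M, x i) ^ 2 - ∑ i ∈ M, ∑ j ∈ M with i < j, x i * x j := by
  set S : Finset ι := {i | c i ≠ 0}
  have hmom : ∀ e, moment univ c x e = moment S c x e := moment_univ_eq_moment_support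
  have hcard : hammingNorm c = #S := rfl
  rw [hammingNorm_fin_two, if_neg hb, hcard] at hw
  have := hcard ▸ lt_hammingNorm_of_moment_eq_zero hx (h.ne_zero hb) h.1
  have hS : #S = t + 1 := by split_ifs at hw <;> omega
  have ha : u 0 = 0 := by
    by_contra ha
    simp only [ha, if_false] at hw
    omega
  obtain ⟨s, rfl⟩ : ∃ s, t = s + 1 := ⟨t - 1, by omega⟩
  have key := moment_card_add_one_eq_mul (t := s) hS fun e he => hmom e ▸ h.1 e he
  rw [← hmom, ← hmom] at key
  obtain ⟨-, h2, h3⟩ := h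
  rw [show s + 1 + 2 = s + 3 from rfl, key, ha] at h3
  refine ⟨S, hS, mul_right_cancel₀ hb ?_⟩
  linear_combination h3 - ((∑ i ∈ S, x i) ^ 2 - ∑ i ∈ S, ∑ j ∈ S with i < j, x i * x j) * h2

lemma exists_isDualWord_of_sum_eq_zero [DecidableEq ι] (hx : Function.Injective x)
    {L : Finset ι} (hL : #L = t + 2) (hsum : ∑ i ∈ L, x i = 0) :
    ∃ c u, IsDualWord x c u δ t ∧ hammingNorm c + hammingNorm u ≠ 0 ∧
      hammingNorm c + hammingNorm u ≤ t + 2 := by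
  obtain ⟨c, hcL, hc⟩ := exists_moment_eq_ite hx.injOn (T := L)
  rw [hL] at hc
  have hlow : ∀ e < t + 1, moment L c x e = 0 := fun e he => by
    rw [hc e (by omega), if_neg (by omega)]
  have htop : moment L c x (t + 1) = 1 := by rw [hc _ (by omega), if_pos (by omega)]
  refine ⟨c, 0, ?_⟩
  simp only [IsDualWord, moment_univ_of_notMem hcL]
  refine ⟨⟨fun e he => hlow e (by omega), ?_, ?_⟩, ?_, ?_⟩
  · simp [hlow t (by omega)]
  · simp [moment_card_eq_sum_mul hL hlow, hsum]
  · rw [hammingNorm_zero, add_zero, hammingNorm_ne_zero_iff]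
    rintro rfl
    simp [moment] at htop
  · have := hammingNorm_le_card_of_notMem hcL
    simp only [hammingNorm_zero]
    omega

lemma exists_isDualWord_of_eq_sq_sub [LinearOrder ι] (hx : Function.Injective x) (ht : 1 ≤ t)
    {M : Finset ι} (hM : #M = t + 1)
    (hδ : δ = (∑ i ∈ M, x i) ^ 2 - ∑ i ∈ M, ∑ j ∈ M with i < j, x i * x j) :
    ∃ c u, IsDualWord x c u δ t ∧ hammingNorm c + hammingNorm u ≠ 0 ∧
      hammingNorm c + hammingNorm u ≤ t + 2 := by
  obtain ⟨s, rfl⟩ : ∃ s, t = s + 1 := ⟨t - 1, by omega⟩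
  obtain ⟨c, hcM, hc⟩ := exists_moment_eq_ite hx.injOn (T := M)
  rw [hM] at hc
  have hlow : ∀ e < s + 1, moment M c x e = 0 := fun e he => by
    rw [hc e (by omega), if_neg (by omega)]
  have htop : moment M c x (s + 1) = 1 := by rw [hc _ (by omega), if_pos (by omega)]
  have hu : hammingNorm ![(0 : F), -1] = 1 := by simp [hammingNorm_fin_two]
  refine ⟨c, ![0, -1], ?_⟩
  simp only [IsDualWord, moment_univ_of_notMem hcM]
  refine ⟨⟨hlow, by simp [htop], ?_⟩, by omega, ?_⟩
  · rw [show s + 1 + 2 = s + 3 from rfl, moment_card_add_one_eq_mul hM hlow, htop, hδ]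
    simp
  · have := hammingNorm_le_card_of_notMem hcM
    omega

end DualWord

section Code

variable {F : Type*} [Field F] {n t : ℕ} {α v : Fin n → F} {δ : F}

lemma sum_Gkmat_mul_append (i : Fin (t + 2)) (w : Fin n → F) (u : Fin 2 → F) :
    ∑ j, Gkmat F n (t + 2) α v δ i j * Fin.append w u j =
      moment univ (v * w) α (if (i : ℕ) = t + 1 then t + 2 else i) +
        (if (i : ℕ) = t + 1 then u 0 else 0) +
        (if (i : ℕ) = t then u 1 else if (i : ℕ) = t + 1 then δ * u 1 else 0) := by
  simp only [Fin.sum_univ_add, Fin.sum_univ_two, Fin.append_left, Fin.append_right, moment]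
  simp [Gkmat, mul_right_comm _ (w _), add_assoc]

lemma append_mem_dualCode_iff (w : Fin n → F) (u : Fin 2 → F) :
    Fin.append w u ∈ dualCode (Submodule.span F (Set.range (Gkmat F n (t + 2) α v δ))) ↔
      IsDualWord α (v * w) u δ t := by
  rw [mem_dualCode_span_iff, Fin.forall_fin_succ', Fin.forall_fin_succ', Fin.forall_iff,
    and_assoc]
  refine and_congr (forall₂_congr fun e he => ?_) (and_congr ?_ ?_)
  · have : e ≠ t + 1 := by omega
    simp [sum_Gkmat_mul_append, he.ne, this]
  · simp [sum_Gkmat_mul_append]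
  · simp [sum_Gkmat_mul_append]

variable [DecidableEq F]

lemma hammingNorm_append_of_ne_zero (hv : ∀ i, v i ≠ 0) (w : Fin n → F) (u : Fin 2 → F) :
    hammingNorm (Fin.append w u) = hammingNorm (v * w) + hammingNorm u := by
  rw [hammingNorm_append, ← hammingNorm_comp (fun i => (v i * ·))
    (fun i => mul_right_injective₀ (hv i)) fun _ => mul_zero _]
  rfl

lemma le_hammingNorm_of_mem_dualCode (hα : Function.Injective α) (hv : ∀ i, v i ≠ 0)
    {y : Fin (n + 2) → F}
    (hy : y ∈ dualCode (Submodule.span F (Set.range (Gkmat F n (t + 2) α v δ))))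
    (hy0 : y ≠ 0) : t + 2 ≤ hammingNorm y := by
  rw [← Fin.append_castAdd_natAdd (f := y)] at hy hy0 ⊢
  rw [← hammingNorm_ne_zero_iff, hammingNorm_append_of_ne_zero hv] at hy0
  rw [hammingNorm_append_of_ne_zero hv]
  exact (((append_mem_dualCode_iff _ _).1 hy).hammingNorm_eq_zero_or_le hα).resolve_left hy0

end Code

theorem stmt_8_general (F : Type*) [Field F] [DecidableEq F] (n k : ℕ) (hk : 3 ≤ k)
    (α v : Fin n → F) (hα : Function.Injective α) (hv : ∀ i, v i ≠ 0) (δ : F) :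
    minDist (dualCode (Submodule.span F (Set.range (Gkmat F n k α v δ)))) k ↔
      ((∃ L : Finset (Fin n), L.card = k ∧ ∑ i ∈ L, α i = 0) ∨
        (∃ M : Finset (Fin n), M.card = k - 1 ∧
          δ = (∑ i ∈ M, α i) ^ 2 - ∑ i ∈ M, ∑ j ∈ M.filter (fun j => i < j), α i * α j)) := by
  obtain ⟨t, rfl⟩ : ∃ t, k = t + 2 := ⟨k - 2, by omega⟩
  constructor
  · rintro ⟨⟨y, hy, -, hwt⟩, -⟩
    rw [← Fin.append_castAdd_natAdd (f := y)] at hy hwt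
    rw [hammingNorm_append_of_ne_zero hv] at hwt
    have hy := (append_mem_dualCode_iff _ _).1 hy
    rcases eq_or_ne (y (Fin.natAdd n 1)) 0 with hb | hb
    · exact .inl (hy.exists_sum_eq_zero hα hb hwt)
    · exact .inr (hy.exists_eq_sq_sub hα (by omega) hb hwt)
  · intro h
    obtain ⟨c, u, hc, hne, hle⟩ : ∃ c u, IsDualWord α c u δ t ∧
        hammingNorm c + hammingNorm u ≠ 0 ∧ hammingNorm c + hammingNorm u ≤ t + 2 :=
      h.elim (fun ⟨L, hL, hsum⟩ => exists_isDualWord_of_sum_eq_zero hα hL hsum)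
        fun ⟨M, hM, hδ⟩ => exists_isDualWord_of_eq_sq_sub hα (by omega) hM hδ
    have hvc : v * (c / v) = c := funext fun j => mul_div_cancel₀ _ (hv j)
    have hy := (append_mem_dualCode_iff (c / v) u).2 (hvc ▸ hc)
    have hy0 : Fin.append (c / v) u ≠ 0 := by
      rwa [← hammingNorm_ne_zero_iff, hammingNorm_append_of_ne_zero hv, hvc]
    refine ⟨⟨_, hy, hy0, le_antisymm ?_ (le_hammingNorm_of_mem_dualCode hα hv hy hy0)⟩,
      fun y hy hy0 => le_hammingNorm_of_mem_dualCode hα hv hy hy0⟩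
    rwa [hammingNorm_append_of_ne_zero hv, hvc]

/-- `C_k(A,v)^⊥` (of length `n+2` and dimension `n+2-k`) is AMDS, i.e. its minimum
Hamming distance equals `k`, iff (1) some `k` of the `α_i` sum to `0`, or
(2) there is a `(k-1)`-subset `M` with `δ = (∑_{i∈M} α_i)² - ∑_{i<j∈M} α_i α_j`. -/
theorem stmt_8 (F : Type*) [Field F] [Fintype F] [DecidableEq F] (n k : ℕ)
    (hk : 3 ≤ k) (hkn : k ≤ n) (hnq : n ≤ Fintype.card F)
    (α v : Fin n → F) (hα : Function.Injective α) (hv : ∀ i, v i ≠ 0) (δ : F) :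
    minDist (dualCode (Submodule.span F (Set.range (Gkmat F n k α v δ)))) k ↔
      ((∃ L : Finset (Fin n), L.card = k ∧ ∑ i ∈ L, α i = 0) ∨
        (∃ M : Finset (Fin n), M.card = k - 1 ∧
          δ = (∑ i ∈ M, α i) ^ 2 - ∑ i ∈ M, ∑ j ∈ M.filter (fun j => i < j), α i * α j)) :=
  stmt_8_general F n k hk α v hα hv δ
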